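/- arXiv:0910.2694 — 3 statements merged into one kernel-verified Lean document; each statement's English description precedes it below -/
import Mathlib

section
/- Let T be an interval exchange transformation that is ergodic with respect to Lebesgue measure λ, and let {a_i}_{i≥1} be a non-increasing sequence of positive reals. (i) If some x ∈ [0,1) satisfies λ(⋂_{n≥1} ⋃_{i≥n} B(T^i x, a_i)) > 0, then λ(⋂_{n≥1} ⋃_{i≥n} B(T^i x, a_i)) = 1. (ii) If the set of x with λ(⋂_{n≥1} ⋃_{i≥n} B(T^i x, a_i)) = 1 has positive λ-measure, then λ(⋂_{n≥1} ⋃_{i≥n} B(T^i x, a_i)) = 1 for λ-almost every x. -/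
/-!
For radii tending to zero, `T` is a translation on a neighbourhood of almost every point, so the
limsup set `E` satisfies `T ⁻¹' E ⊆ E` up to a null set, and ergodicity gives `λ(E) ∈ {0, 1}`.
For radii bounded below by `θ > 0`, `E ⊇ [0, 1)`, since every orbit of an ergodic interval
exchange enters every interval `J`. Indeed, the first return time to `J` is constant between
consecutive points of the finite set of points of `J` whose orbit meets a discontinuity or an
endpoint of `J` before returning; hence it is bounded by some `H`, and by ergodicity almost every
point enters `J` within `H` steps. The points of `[0, 1)` that do not form a null set containing a
right neighbourhood `[z, z + ε)` of each of its points `z`, so there are none.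
For (ii), `x ↦ λ(E_x)` does not decrease along orbits, so `{x | λ(E_x) = 1}` is forward invariant.
-/

open MeasureTheory Filter

noncomputable section

/-- Lebesgue measure on `[0,1)`. -/
def lam : Measure ℝ := volume.restrict (Set.Ico 0 1)

/-- `⋂_{n} ⋃_{i ≥ n} A i`: the set of points lying in `A i` for infinitely many `i`. -/
def limsupSet {α : Type*} (A : ℕ → Set α) : Set α :=
  ⋂ n, ⋃ i, ⋃ _ : n ≤ i, A i

/-- A sequence of positive reals which is non-increasing with divergent sum. -/
def standardSeq (a : ℕ → ℝ) : Prop :=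
  (∀ i, 0 < a i) ∧ (∀ m n, m ≤ n → a n ≤ a m) ∧ ¬ Summable a

/-- The left endpoint of the `j`-th interval determined by the length vector `L`. -/
def pieceLeft {d : ℕ} (L : Fin d → ℝ) (j : Fin d) : ℝ :=
  ∑ k ∈ Finset.univ.filter (fun k => k < j), L k

/-- `x` belongs to the `j`-th interval `I_j = [∑_{k<j} l_k, ∑_{k≤j} l_k)`. -/
def inPiece {d : ℕ} (L : Fin d → ℝ) (j : Fin d) (x : ℝ) : Prop :=
  pieceLeft L j ≤ x ∧ x < pieceLeft L j + L j

open scoped Classical in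
/-- The interval exchange transformation `S_{L,π}` (extended by the identity off `[0,1)`). -/
def iet {d : ℕ} (L : Fin d → ℝ) (π : Equiv.Perm (Fin d)) (x : ℝ) : ℝ :=
  if h : ∃ j, inPiece L j x then
    x - pieceLeft L h.choose + ∑ k ∈ Finset.univ.filter (fun k => π k < π h.choose), L k
  else x

/-- Irreducibility of a permutation: no proper initial segment is invariant. -/
def IrredPerm {d : ℕ} (π : Equiv.Perm (Fin d)) : Prop :=
  ∀ k : Fin d, (k : ℕ) + 1 < d → Finset.image π (Finset.Iic k) ≠ Finset.Iic k

/-- The simplex of length vectors. -/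
def simplexSet (d : ℕ) : Set (Fin d → ℝ) :=
  {L | (∀ i, 0 < L i) ∧ ∑ i, L i = 1}

/-- Normalization of a positive length vector to the simplex. -/
def normLen {d : ℕ} (L : Fin d → ℝ) : Fin d → ℝ := fun i => L i / ∑ j, L j

/-- `T` is ergodic with respect to Lebesgue measure on `[0,1)`: every `T`-invariant
measurable subset of `[0,1)` has measure `0` or `1`. -/
def ergodicOn01 (T : ℝ → ℝ) : Prop :=
  ∀ A : Set ℝ, A ⊆ Set.Ico 0 1 → MeasurableSet A → T ⁻¹' A = A → lam A = 0 ∨ lam A = 1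

open Set Function Topology

instance : IsProbabilityMeasure lam := ⟨by simp [lam]⟩

instance : NullSingletonClass lam := by rw [lam]; infer_instance

theorem lam_apply (s : Set ℝ) : lam s = volume (s ∩ Ico 0 1) :=
  Measure.restrict_apply' measurableSet_Ico

theorem lam_Ico {a b : ℝ} (ha : 0 ≤ a) (hb : b ≤ 1) : lam (Ico a b) = ENNReal.ofReal (b - a) := by
  rw [lam_apply, inter_eq_left.2 (Ico_subset_Ico ha hb), Real.volume_Ico]

theorem mem_limsupSet {α : Type*} {A : ℕ → Set α} {y : α} :
    y ∈ limsupSet A ↔ ∃ᶠ i in atTop, y ∈ A i := by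
  simp [limsupSet, frequently_atTop]

theorem measurableSet_limsupSet {α : Type*} [MeasurableSpace α] {A : ℕ → Set α}
    (hA : ∀ i, MeasurableSet (A i)) : MeasurableSet (limsupSet A) :=
  .iInter fun _ => .iUnion fun i => .iUnion fun _ => hA i

theorem frequently_atTop_succ {p : ℕ → Prop} (h : ∃ᶠ i in atTop, p i) :
    ∃ᶠ i in atTop, p (i + 1) := by
  rw [← map_add_atTop_eq_nat 1] at h
  exact frequently_map.1 h

theorem eq_empty_of_volume_eq_zero_of_mem_nhdsGE {K : Set ℝ} (hK : ∀ z ∈ K, K ∈ 𝓝[≥] z)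
    (h0 : volume K = 0) : K = ∅ := by
  refine eq_empty_of_forall_notMem fun z hz => ?_
  obtain ⟨u, hzu, hsub⟩ := mem_nhdsGE_iff_exists_Ico_subset.1 (hK z hz)
  have := measure_mono (μ := volume) hsub
  rw [h0, Real.volume_Ico, nonpos_iff_eq_zero, ENNReal.ofReal_eq_zero] at this
  linarith [mem_Ioi.1 hzu]

theorem mem_Ico_iff_of_notMem_Ioc {α : Type*} [LinearOrder α] {a b z w : α} (hzw : z ≤ w) (ha : a ∉ Ioc z w)
    (hb : b ∉ Ioc z w) : w ∈ Ico a b ↔ z ∈ Ico a b := by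
  simp only [mem_Ioc, mem_Ico, not_and, not_le] at *
  exact ⟨fun ⟨h1, h2⟩ => ⟨not_lt.1 fun h => (ha h).not_ge h1, hzw.trans_lt h2⟩,
    fun ⟨h1, h2⟩ => ⟨h1.trans hzw, hb h2⟩⟩

theorem eventually_notMem_Ioc_add (z c p : ℝ) : ∀ᶠ y in 𝓝[≥] z, p ∉ Ioc c (c + (y - z)) := by
  rcases le_or_gt p c with hp | hp
  · exact Eventually.of_forall fun y hy => hp.not_gt hy.1
  · filter_upwards [nhdsWithin_le_nhds (Iio_mem_nhds (show z < z + (p - c) by linarith))]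
      with y hy hpy
    linarith [mem_Iio.1 hy, hpy.2]

def orbitApprox {α : Type*} [PseudoMetricSpace α] (T : α → α) (a : ℕ → ℝ) (x : α) : Set α :=
  limsupSet fun i => Metric.ball (T^[i] x) (a i)

section ZeroOneLaw

variable {α : Type*} [PseudoMetricSpace α] {T : α → α} {a : ℕ → ℝ}

theorem mem_orbitApprox {x y : α} :
    y ∈ orbitApprox T a x ↔ ∃ᶠ i in atTop, dist y (T^[i] x) < a i := by
  simp [orbitApprox, mem_limsupSet]

theorem orbitApprox_subset_apply (ha : Antitone a) (x : α) :
    orbitApprox T a x ⊆ orbitApprox T a (T x) := fun y hy =>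
  mem_orbitApprox.2 <| (frequently_atTop_succ (mem_orbitApprox.1 hy)).mono fun i hi => by
    rw [← iterate_succ_apply]
    exact hi.trans_le (ha i.le_succ)

variable [SecondCountableTopology α] [MeasurableSpace α] [BorelSpace α]

theorem measurable_measure_orbitApprox {μ : Measure α} [SFinite μ] (hT : Measurable T)
    (a : ℕ → ℝ) : Measurable fun x => μ (orbitApprox T a x) := by
  have hG : {p : α × α | p.2 ∈ orbitApprox T a p.1} =
      limsupSet fun i => {p | dist p.2 (T^[i] p.1) < a i} := by
    ext p
    simp [orbitApprox, mem_limsupSet]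
  exact measurable_measure_prodMk_left (ν := μ) <| hG ▸ measurableSet_limsupSet fun i =>
    measurableSet_lt (measurable_snd.dist ((hT.iterate i).comp measurable_fst)) measurable_const

theorem ae_measure_orbitApprox_eq_one {μ : Measure α} [IsProbabilityMeasure μ]
    (herg : Ergodic T μ) (ha : Antitone a) (h : 0 < μ {x | μ (orbitApprox T a x) = 1}) :
    ∀ᵐ x ∂μ, μ (orbitApprox T a x) = 1 := by
  set B := {x | μ (orbitApprox T a x) = 1}
  have hB : MeasurableSet B :=
    measurable_measure_orbitApprox herg.measurable a (measurableSet_singleton 1)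
  have hBT : B ⊆ T ⁻¹' B := fun x hx =>
    le_antisymm prob_le_one (hx ▸ measure_mono (orbitApprox_subset_apply ha x))
  rcases herg.ae_empty_or_univ_of_ae_le_preimage hB.nullMeasurableSet
    (Eventually.of_forall hBT) with h0 | h1
  · exact absurd (ae_eq_empty.1 h0) h.ne'
  · exact ae_iff.2 (ae_eq_univ.1 h1)

end ZeroOneLaw

def IsPiecewiseTranslation (T : ℝ → ℝ) (M : Set ℝ) : Prop :=
  ∀ ⦃z w : ℝ⦄, z ≤ w → (∀ p ∈ M, p ∉ Ioc z w) → T w - w = T z - z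

namespace IsPiecewiseTranslation

variable {T : ℝ → ℝ} {M : Set ℝ}

theorem eventually_iterate_sub_eq (hT : IsPiecewiseTranslation T M) (hM : M.Finite) (z : ℝ)
    (k : ℕ) : ∀ᶠ y in 𝓝[≥] z, T^[k] y - y = T^[k] z - z := by
  induction k with
  | zero => simp
  | succ k ih =>
    have hfree : ∀ᶠ y in 𝓝[≥] z, ∀ p ∈ M, p ∉ Ioc (T^[k] z) (T^[k] z + (y - z)) :=
      hM.eventually_all.2 fun p _ => eventually_notMem_Ioc_add z _ p
    filter_upwards [ih, hfree, self_mem_nhdsWithin] with y hy hfy (hzy : z ≤ y)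
    have hk : T^[k] y = T^[k] z + (y - z) := by linarith
    have := hT (by linarith : T^[k] z ≤ T^[k] y) (by rwa [hk])
    rw [iterate_succ_apply', iterate_succ_apply']
    linarith

theorem eventually_iterate_notMem_Ico (hT : IsPiecewiseTranslation T M) (hM : M.Finite)
    {z a b : ℝ} {k : ℕ} (h : T^[k] z ∉ Ico a b) : ∀ᶠ y in 𝓝[≥] z, T^[k] y ∉ Ico a b := by
  filter_upwards [hT.eventually_iterate_sub_eq hM z k, eventually_notMem_Ioc_add z (T^[k] z) a,
    eventually_notMem_Ioc_add z (T^[k] z) b, self_mem_nhdsWithin] with y hy ha hb (hzy : z ≤ y)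
  rwa [show T^[k] y = T^[k] z + (y - z) by linarith,
    mem_Ico_iff_of_notMem_Ioc (by linarith) ha hb]

end IsPiecewiseTranslation

section FirstReturn

variable (T : ℝ → ℝ) (a b : ℝ)

/-- `u` lies outside `[a, b)` at the times `1, …, n - 1`. -/
def AvoidsBefore (u : ℝ) (n : ℕ) : Prop :=
  ∀ i, 0 < i → i < n → T^[i] u ∉ Ico a b

def IsFirstReturn (u : ℝ) (r : ℕ) : Prop :=
  0 < r ∧ T^[r] u ∈ Ico a b ∧ AvoidsBefore T a b u r

/-- Between two consecutive return cuts the first return map to `[a, b)` is a single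
translation. -/
def returnCuts (M : Set ℝ) : Set ℝ :=
  {u ∈ Ico a b | ∃ k, T^[k] u ∈ insert a (insert b M) ∧ AvoidsBefore T a b u k}

variable {T a b}

theorem IsFirstReturn.unique {u : ℝ} {r r' : ℕ} (h : IsFirstReturn T a b u r)
    (h' : IsFirstReturn T a b u r') : r = r' := by
  by_contra hne
  rcases lt_or_gt_of_ne hne with hlt | hlt
  · exact h'.2.2 r h.1 hlt h.2.1
  · exact h.2.2 r' h'.1 hlt h'.2.1

theorem subsingleton_firstHit (hinj : Injective T) (p : ℝ) :
    {u ∈ Ico a b | ∃ k, 0 < k ∧ T^[k] u = p ∧ AvoidsBefore T a b u k}.Subsingleton := by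
  rintro u ⟨hu, k, hk, hku, hav⟩ u' ⟨hu', k', hk', hku', hav'⟩
  wlog hkk : k ≤ k' generalizing u u' k k'
  · exact (this hu' k' hk' hku' hav' hu k hk hku hav (le_of_not_ge hkk)).symm
  have hback : T^[k' - k] u' = u := hinj.iterate k <| by
    rw [← iterate_add_apply, Nat.add_sub_cancel' hkk, hku, hku']
  rcases hkk.lt_or_eq with hlt | rfl
  · exact absurd (hback ▸ hu) (hav' _ (by omega) (by omega))
  · simpa using hback.symm

theorem finite_returnCuts (hinj : Injective T) {M : Set ℝ} (hM : M.Finite) :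
    (returnCuts T a b M).Finite := by
  have hP : (insert a (insert b M)).Finite := (hM.insert b).insert a
  refine (hP.union <| hP.biUnion fun p _ =>
    (subsingleton_firstHit (a := a) (b := b) hinj p).finite).subset ?_
  rintro u ⟨hu, k, hkP, hav⟩
  rcases Nat.eq_zero_or_pos k with rfl | hk
  · exact Or.inl hkP
  · exact Or.inr (mem_biUnion hkP ⟨hu, k, hk, rfl, hav⟩)

end FirstReturn

namespace IsPiecewiseTranslation

variable {T : ℝ → ℝ} {M : Set ℝ} {a b : ℝ}

theorem segment_iterate (hT : IsPiecewiseTranslation T M) {w w' : ℝ} (hww' : w ≤ w') (haw : a ≤ w)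
    (hw'b : w' < b) (hfree : ∀ u ∈ Ioc w w', u ∉ returnCuts T a b M) {n : ℕ}
    (hn : AvoidsBefore T a b w n) (k : ℕ) (hk : k ≤ n) :
    (∀ u ∈ Icc w w', T^[k] u - u = T^[k] w - w ∧ AvoidsBefore T a b u k) ∧
      ∀ p ∈ insert a (insert b M), p ∉ Ioc (T^[k] w) (T^[k] w') := by
  induction k with
  | zero =>
    refine ⟨fun u _ => ⟨by simp, fun i hi hi' => by omega⟩, fun p hp hpw => ?_⟩
    simp only [iterate_zero, id_eq] at hpw
    exact hfree p hpw ⟨⟨haw.trans hpw.1.le, hpw.2.trans_lt hw'b⟩, 0, hp, fun i hi hi' => by omega⟩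
  | succ k ih =>
    obtain ⟨hR, hF⟩ := ih (by omega)
    have hw'k := (hR w' ⟨hww', le_rfl⟩).1
    have hsub : ∀ u ∈ Icc w w', Ioc (T^[k] w) (T^[k] u) ⊆ Ioc (T^[k] w) (T^[k] w') :=
      fun u hu => Ioc_subset_Ioc_right (by linarith [(hR u hu).1, hu.2])
    have hR' : ∀ u ∈ Icc w w', T^[k + 1] u - u = T^[k + 1] w - w := by
      intro u hu
      have hstep := hT (by linarith [(hR u hu).1, hu.1] : T^[k] w ≤ T^[k] u)
        fun p hp hpu => hF p (mem_insert_of_mem _ (mem_insert_of_mem _ hp)) (hsub u hu hpu)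
      rw [iterate_succ_apply', iterate_succ_apply']
      linarith [(hR u hu).1]
    have hA : ∀ u ∈ Icc w w', AvoidsBefore T a b u (k + 1) := by
      intro u hu i hi hik
      rcases (Nat.lt_succ_iff.1 hik).lt_or_eq with hik | rfl
      · exact (hR u hu).2 i hi hik
      · rw [mem_Ico_iff_of_notMem_Ioc (by linarith [(hR u hu).1, hu.1])
          (fun h => hF a (mem_insert _ _) (hsub u hu h))
          (fun h => hF b (mem_insert_of_mem _ (mem_insert _ _)) (hsub u hu h))]
        exact hn i hi (by omega)
    refine ⟨fun u hu => ⟨hR' u hu, hA u hu⟩, fun p hp hpw => ?_⟩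
    have hw'k1 := hR' w' ⟨hww', le_rfl⟩
    -- the point of `(w, w']` sent onto `p` would be a return cut
    set u := w + (p - T^[k + 1] w)
    have hu : u ∈ Ioc w w' := ⟨by linarith [hpw.1], by linarith [hpw.2]⟩
    refine hfree u hu ⟨⟨haw.trans hu.1.le, hu.2.trans_lt hw'b⟩, k + 1, ?_,
      hA u (Ioc_subset_Icc_self hu)⟩
    convert hp using 1
    linarith [hR' u (Ioc_subset_Icc_self hu)]

theorem isFirstReturn_of_segment (hT : IsPiecewiseTranslation T M) {w w' u : ℝ} (hww' : w ≤ w')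
    (haw : a ≤ w) (hw'b : w' < b) (hfree : ∀ u ∈ Ioc w w', u ∉ returnCuts T a b M) {r : ℕ}
    (hr : IsFirstReturn T a b w r) (hu : u ∈ Icc w w') : IsFirstReturn T a b u r := by
  obtain ⟨hR, hF⟩ := hT.segment_iterate hww' haw hw'b hfree hr.2.2 r le_rfl
  have hsub : Ioc (T^[r] w) (T^[r] u) ⊆ Ioc (T^[r] w) (T^[r] w') :=
    Ioc_subset_Ioc_right (by linarith [(hR u hu).1, (hR w' ⟨hww', le_rfl⟩).1, hu.2])
  refine ⟨hr.1, ?_, (hR u hu).2⟩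
  rw [mem_Ico_iff_of_notMem_Ioc (by linarith [(hR u hu).1, hu.1])
    (fun h => hF a (mem_insert _ _) (hsub h))
    (fun h => hF b (mem_insert_of_mem _ (mem_insert _ _)) (hsub h))]
  exact hr.2.1

theorem bddAbove_firstReturn (hT : IsPiecewiseTranslation T M) (hM : M.Finite)
    (hinj : Injective T) : BddAbove {r | ∃ u ∈ Ico a b, IsFirstReturn T a b u r} := by
  set C := returnCuts T a b M
  have hQ : (insert a C).Finite := (finite_returnCuts hinj hM).insert a
  let block (q : ℝ) : Set ℝ := {u ∈ Ico a b | q ≤ u ∧ ∀ c ∈ C, c ∉ Ioc q u}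
  have hblock : ∀ q, {r | ∃ u ∈ block q, IsFirstReturn T a b u r}.Subsingleton := by
    rintro q r ⟨u, hu, hr⟩ r' ⟨u', hu', hr'⟩
    have key : ∀ {u u' r r'}, u ∈ block q → u' ∈ block q → u ≤ u' →
        IsFirstReturn T a b u r → IsFirstReturn T a b u' r' → r = r' :=
      fun hu hu' huu hr hr' => (hT.isFirstReturn_of_segment huu hu.1.1 hu'.1.2
        (fun c hc hcC => hu'.2.2 c hcC ⟨hu.2.1.trans_lt hc.1, hc.2⟩) hr ⟨huu, le_rfl⟩).unique hr'
    rcases le_total u u' with h | h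
    · exact key hu hu' h hr hr'
    · exact (key hu' hu h hr' hr).symm
  refine ((hQ.biUnion fun q _ => (hblock q).finite).bddAbove).mono ?_
  rintro r ⟨u, hu, hr⟩
  obtain ⟨q, ⟨hqQ, hqu⟩, hqmax⟩ := exists_max_image {c ∈ insert a C | c ≤ u} id
    (hQ.subset fun c hc => hc.1) ⟨a, mem_insert _ _, hu.1⟩
  exact mem_biUnion hqQ ⟨u, ⟨hu, hqu, fun c hc hcq =>
    (hqmax c ⟨mem_insert_of_mem _ hc, hcq.2⟩).not_gt hcq.1⟩, hr⟩

theorem ae_exists_iterate_mem_Ico (hT : IsPiecewiseTranslation T M) (hM : M.Finite)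
    (hinj : Injective T) (herg : Ergodic T lam) (hJ : 0 < lam (Ico a b)) :
    ∃ H, ∀ᵐ z ∂lam, ∃ k ∈ Finset.Icc 1 H, T^[k] z ∈ Ico a b := by
  obtain ⟨H, hH⟩ := hT.bddAbove_firstReturn (a := a) (b := b) hM hinj
  refine ⟨H + 1, ?_⟩
  set Y := {z | ∃ k ∈ Finset.Icc 1 (H + 1), T^[k] z ∈ Ico a b}
  have hYm : MeasurableSet Y := by
    have : Y = ⋃ k ∈ Finset.Icc 1 (H + 1), T^[k] ⁻¹' Ico a b := by
      ext z
      simp only [Y, mem_ofPred_eq, mem_iUnion, mem_preimage, exists_prop]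
    rw [this]
    exact Finset.measurableSet_biUnion _ fun k _ => herg.measurable.iterate k measurableSet_Ico
  have hret : ∀ᵐ u ∂lam, u ∈ Ico a b → u ∈ Y := by
    filter_upwards [herg.conservative.ae_mem_imp_frequently_image_mem
      measurableSet_Ico.nullMeasurableSet] with u hu huJ
    have hex : ∃ n, 0 < n ∧ T^[n] u ∈ Ico a b :=
      ((hu huJ).and_eventually (eventually_gt_atTop 0)).exists.imp fun n h => ⟨h.2, h.1⟩
    have hr : IsFirstReturn T a b u (Nat.find hex) := ⟨(Nat.find_spec hex).1,
      (Nat.find_spec hex).2, fun i hi hir hiJ => Nat.find_min hex hir ⟨hi, hiJ⟩⟩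
    exact ⟨_, Finset.mem_Icc.2 ⟨hr.1, (hH ⟨u, huJ, hr⟩).trans H.le_succ⟩, hr.2.1⟩
  have hYT : Y ≤ᵐ[lam] T ⁻¹' Y := by
    filter_upwards [herg.quasiMeasurePreserving.ae hret] with z hz ⟨k, hk, hkz⟩
    obtain ⟨hk1, hkH⟩ := Finset.mem_Icc.1 hk
    rcases hk1.eq_or_lt with rfl | hk1
    · exact hz hkz
    · refine ⟨k - 1, Finset.mem_Icc.2 ⟨by omega, by omega⟩, ?_⟩
      rwa [← iterate_succ_apply, Nat.succ_eq_add_one, Nat.sub_add_cancel hk1.le]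
  rcases herg.ae_empty_or_univ_of_ae_le_preimage hYm.nullMeasurableSet hYT with h | h
  · have : lam (T ⁻¹' Ico a b) ≤ lam Y :=
      measure_mono fun z hz => ⟨1, Finset.mem_Icc.2 ⟨le_rfl, by omega⟩, hz⟩
    rw [herg.measure_preimage measurableSet_Ico.nullMeasurableSet, ae_eq_empty.1 h] at this
    exact absurd (nonpos_iff_eq_zero.1 this) hJ.ne'
  · exact ae_iff.2 (ae_eq_univ.1 h)

theorem exists_iterate_mem_Ico_of_ae (hT : IsPiecewiseTranslation T M) (hM : M.Finite)
    {s : Finset ℕ} (h : ∀ᵐ z ∂lam, ∃ k ∈ s, T^[k] z ∈ Ico a b) {x : ℝ} (hx : x ∈ Ico 0 1) :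
    ∃ k ∈ s, T^[k] x ∈ Ico a b := by
  set K := {z | ∀ k ∈ s, T^[k] z ∉ Ico a b} ∩ Ico 0 1
  have hK : K = ∅ := by
    refine eq_empty_of_volume_eq_zero_of_mem_nhdsGE (fun z hz => inter_mem ?_ ?_) ?_
    · exact (eventually_all_finset s).2 fun k hk => hT.eventually_iterate_notMem_Ico hM (hz.1 k hk)
    · exact mem_of_superset (Ico_mem_nhdsGE hz.2.2) (Ico_subset_Ico_left hz.2.1)
    · rw [← lam_apply]
      simpa [ae_iff] using h
  by_contra! hne
  exact hK.subset ⟨hne, hx⟩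

theorem frequently_iterate_mem_Ico (hT : IsPiecewiseTranslation T M) (hM : M.Finite)
    (hinj : Injective T) (hmaps : MapsTo T (Ico 0 1) (Ico 0 1)) (herg : Ergodic T lam)
    (hJ : 0 < lam (Ico a b)) {x : ℝ} (hx : x ∈ Ico 0 1) : ∃ᶠ n in atTop, T^[n] x ∈ Ico a b := by
  obtain ⟨H, hH⟩ := hT.ae_exists_iterate_mem_Ico hM hinj herg hJ
  refine frequently_atTop.2 fun N => ?_
  obtain ⟨k, -, hkx⟩ := hT.exists_iterate_mem_Ico_of_ae hM hH (hmaps.iterate N hx)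
  exact ⟨k + N, le_add_self, by rwa [iterate_add_apply]⟩

end IsPiecewiseTranslation

namespace IntervalExchange

variable {d : ℕ} {L : Fin d → ℝ} {a : ℕ → ℝ}

def partialSum (L : Fin d → ℝ) (n : ℕ) : ℝ :=
  ∑ k ∈ Finset.univ.filter (fun k : Fin d => (k : ℕ) < n), L k

theorem partialSum_val (L : Fin d → ℝ) (j : Fin d) : partialSum L j = pieceLeft L j := rfl

theorem partialSum_val_succ (L : Fin d → ℝ) (j : Fin d) :
    partialSum L (j + 1) = pieceLeft L j + L j := by
  rw [← partialSum_val, partialSum, partialSum, add_comm (∑ k ∈ _, L k),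
    ← Finset.sum_insert (by simp)]
  congr 1
  ext k
  simp only [Finset.mem_filter, Finset.mem_univ, true_and, Finset.mem_insert, Fin.ext_iff]
  omega

theorem partialSum_zero (L : Fin d → ℝ) : partialSum L 0 = 0 := by
  simp [partialSum]

theorem partialSum_dim (hL : L ∈ simplexSet d) : partialSum L d = 1 := by
  simp [partialSum, hL.2]

theorem partialSum_mono (hL : L ∈ simplexSet d) : Monotone (partialSum L) :=
  fun _ _ hmn => Finset.sum_le_sum_of_subset_of_nonneg
    (fun k => by simp only [Finset.mem_filter, Finset.mem_univ, true_and]; omega)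
    fun k _ _ => (hL.1 k).le

theorem exists_inPiece (hL : L ∈ simplexSet d) {x : ℝ} (hx : x ∈ Ico 0 1) :
    ∃ j, inPiece L j x := by
  have hex : ∃ n, x < partialSum L n := ⟨d, by rw [partialSum_dim hL]; exact hx.2⟩
  obtain ⟨m, hm⟩ : ∃ m, Nat.find hex = m + 1 :=
    Nat.exists_eq_succ_of_ne_zero fun h => (Nat.find_spec hex).not_ge <| by
      rw [h, partialSum_zero]; exact hx.1
  have hmd : m < d := by
    have := Nat.find_min' hex (m := d) (by rw [partialSum_dim hL]; exact hx.2)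
    omega
  refine ⟨⟨m, hmd⟩, ?_, ?_⟩
  · exact not_lt.1 (Nat.find_min hex (by omega : m < Nat.find hex))
  · rw [← partialSum_val_succ, ← hm]; exact Nat.find_spec hex

theorem mem_Ico_of_inPiece (hL : L ∈ simplexSet d) {j : Fin d} {x : ℝ} (h : inPiece L j x) :
    x ∈ Ico 0 1 := by
  refine ⟨(Finset.sum_nonneg fun k _ => (hL.1 k).le).trans h.1, h.2.trans_le ?_⟩
  rw [← partialSum_val_succ, ← partialSum_dim hL]
  exact partialSum_mono hL j.2

theorem inPiece_unique (hL : L ∈ simplexSet d) {j j' : Fin d} {x : ℝ} (h : inPiece L j x)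
    (h' : inPiece L j' x) : j = j' := by
  have key : ∀ {i i' : Fin d}, i < i' → inPiece L i x → inPiece L i' x → False :=
    fun hii' hi hi' => by
      have := partialSum_mono hL (Nat.succ_le_of_lt hii')
      rw [partialSum_val_succ, partialSum_val] at this
      linarith [hi.2, hi'.1]
  rcases lt_trichotomy j j' with hlt | heq | hlt
  exacts [(key hlt h h').elim, heq, (key hlt h' h).elim]

theorem comp_symm_mem_simplexSet (hL : L ∈ simplexSet d) (π : Equiv.Perm (Fin d)) :
    L ∘ π.symm ∈ simplexSet d :=
  ⟨fun _ => hL.1 _, by rw [← hL.2]; exact Equiv.sum_comp π.symm L⟩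

theorem pieceLeft_comp_symm (L : Fin d → ℝ) (π : Equiv.Perm (Fin d)) (j : Fin d) :
    pieceLeft (L ∘ π.symm) (π j) = ∑ k ∈ Finset.univ.filter (fun k => π k < π j), L k := by
  rw [pieceLeft, Finset.sum_filter, Finset.sum_filter, ← Equiv.sum_comp π]
  simp

theorem iet_of_inPiece (hL : L ∈ simplexSet d) (π : Equiv.Perm (Fin d)) {j : Fin d} {x : ℝ}
    (h : inPiece L j x) :
    iet L π x = x + (pieceLeft (L ∘ π.symm) (π j) - pieceLeft L j) := by
  have hex : ∃ j, inPiece L j x := ⟨j, h⟩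
  rw [iet, dif_pos hex, inPiece_unique hL hex.choose_spec h, pieceLeft_comp_symm]
  ring

theorem iet_of_notMem (hL : L ∈ simplexSet d) (π : Equiv.Perm (Fin d)) {x : ℝ}
    (hx : x ∉ Ico 0 1) : iet L π x = x :=
  dif_neg fun ⟨_, hj⟩ => hx (mem_Ico_of_inPiece hL hj)

theorem inPiece_iet (hL : L ∈ simplexSet d) (π : Equiv.Perm (Fin d)) {j : Fin d} {x : ℝ}
    (h : inPiece L j x) : inPiece (L ∘ π.symm) (π j) (iet L π x) := by
  have hlen : (L ∘ π.symm) (π j) = L j := by simp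
  rw [iet_of_inPiece hL π h, inPiece, hlen]
  constructor <;> linarith [h.1, h.2]

theorem mapsTo_iet (hL : L ∈ simplexSet d) (π : Equiv.Perm (Fin d)) :
    MapsTo (iet L π) (Ico 0 1) (Ico 0 1) := fun _ hx =>
  let ⟨_, hj⟩ := exists_inPiece hL hx
  mem_Ico_of_inPiece (comp_symm_mem_simplexSet hL π) (inPiece_iet hL π hj)

theorem iet_injective (hL : L ∈ simplexSet d) (π : Equiv.Perm (Fin d)) : Injective (iet L π) := by
  have hmix : ∀ {z w}, z ∈ Ico 0 1 → w ∉ Ico 0 1 → iet L π z ≠ iet L π w := fun hz hw h =>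
    hw (iet_of_notMem hL π hw ▸ h ▸ mapsTo_iet hL π hz)
  intro z w h
  by_cases hz : z ∈ Ico 0 1 <;> by_cases hw : w ∈ Ico 0 1
  · obtain ⟨j, hj⟩ := exists_inPiece hL hz
    obtain ⟨j', hj'⟩ := exists_inPiece hL hw
    obtain rfl : j = j' := π.injective <| inPiece_unique (comp_symm_mem_simplexSet hL π)
      (inPiece_iet hL π hj) (h ▸ inPiece_iet hL π hj')
    have := iet_of_inPiece hL π hj
    have := iet_of_inPiece hL π hj'
    linarith
  · exact (hmix hz hw h).elim
  · exact (hmix hw hz h.symm).elim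
  · rwa [iet_of_notMem hL π hz, iet_of_notMem hL π hw] at h

def piece (L : Fin d → ℝ) (j : Fin d) : Set ℝ := {x | inPiece L j x}

theorem piece_eq_Ico (L : Fin d → ℝ) (j : Fin d) :
    piece L j = Ico (pieceLeft L j) (pieceLeft L j + L j) := rfl

theorem iUnion_piece (hL : L ∈ simplexSet d) : ⋃ j, piece L j = Ico 0 1 :=
  Subset.antisymm (iUnion_subset fun _ _ hx => mem_Ico_of_inPiece hL hx)
    fun _ hx => mem_iUnion.2 (exists_inPiece hL hx)

theorem pairwise_disjoint_piece (hL : L ∈ simplexSet d) : Pairwise (Disjoint on piece L) :=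
  fun _ _ hne => disjoint_left.2 fun _ hx hx' => hne (inPiece_unique hL hx hx')

theorem iet_eq_add_sum_indicator (hL : L ∈ simplexSet d) (π : Equiv.Perm (Fin d)) (x : ℝ) :
    iet L π x = x + ∑ j, (piece L j).indicator
      (fun _ => pieceLeft (L ∘ π.symm) (π j) - pieceLeft L j) x := by
  by_cases hx : x ∈ Ico 0 1
  · obtain ⟨j, hj⟩ := exists_inPiece hL hx
    rw [iet_of_inPiece hL π hj, Finset.sum_eq_single j,
      indicator_of_mem (show x ∈ piece L j from hj)]
    · exact fun i _ hij => indicator_of_notMem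
        (show x ∉ piece L i from fun hi => hij (inPiece_unique hL hi hj)) _
    · simp
  · rw [iet_of_notMem hL π hx, Finset.sum_eq_zero fun j _ => indicator_of_notMem
      (show x ∉ piece L j from fun hj => hx (mem_Ico_of_inPiece hL hj)) _, add_zero]

theorem measurable_iet (hL : L ∈ simplexSet d) (π : Equiv.Perm (Fin d)) :
    Measurable (iet L π) := by
  rw [funext (iet_eq_add_sum_indicator hL π)]
  exact measurable_id.add <| Finset.measurable_sum _ fun j _ =>
    measurable_const.indicator measurableSet_Ico

theorem lam_eq_sum_piece (hL : L ∈ simplexSet d) :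
    lam = Measure.sum fun j => volume.restrict (piece L j) := by
  rw [lam, ← iUnion_piece hL,
    Measure.restrict_iUnion (pairwise_disjoint_piece hL) fun _ => measurableSet_Ico]

theorem map_iet_restrict_piece (hL : L ∈ simplexSet d) (π : Equiv.Perm (Fin d)) (j : Fin d) :
    (volume.restrict (piece L j)).map (iet L π) = volume.restrict (piece (L ∘ π.symm) (π j)) := by
  set c := pieceLeft (L ∘ π.symm) (π j) - pieceLeft L j
  have hT : iet L π =ᵐ[volume.restrict (piece L j)] (· + c) :=
    (ae_restrict_mem measurableSet_Ico).mono fun x hx => iet_of_inPiece hL π hx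
  have hpre : (· + c) ⁻¹' piece (L ∘ π.symm) (π j) = piece L j := by
    rw [piece_eq_Ico, piece_eq_Ico, preimage_add_const_Ico]
    congr 1
    · simp [c]
    · simp [c]
      ring
  rw [Measure.map_congr hT, ← hpre]
  exact ((measurePreserving_add_right volume c).restrict_preimage_emb
    (measurableEmbedding_addRight c) _).map_eq

theorem measurePreserving_iet (hL : L ∈ simplexSet d) (π : Equiv.Perm (Fin d)) :
    MeasurePreserving (iet L π) lam lam := by
  refine ⟨measurable_iet hL π, ?_⟩
  conv_rhs => rw [lam_eq_sum_piece (comp_symm_mem_simplexSet hL π)]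
  rw [lam_eq_sum_piece hL, Measure.map_sum (measurable_iet hL π).aemeasurable]
  simp_rw [map_iet_restrict_piece hL π]
  exact Measure.sum_comp_equiv π (fun j => volume.restrict (piece (L ∘ π.symm) j))

theorem preimage_iet_Ico (hL : L ∈ simplexSet d) (π : Equiv.Perm (Fin d)) :
    iet L π ⁻¹' Ico 0 1 = Ico 0 1 := by
  ext x
  by_cases hx : x ∈ Ico 0 1
  · exact iff_of_true (mapsTo_iet hL π hx) hx
  · rw [mem_preimage, iet_of_notMem hL π hx]

theorem ergodic_iet (hL : L ∈ simplexSet d) (π : Equiv.Perm (Fin d))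
    (h : ergodicOn01 (iet L π)) : Ergodic (iet L π) lam where
  toMeasurePreserving := measurePreserving_iet hL π
  aeconst_set s hs hinv := by
    have hinv' : iet L π ⁻¹' (s ∩ Ico 0 1) = s ∩ Ico 0 1 := by
      rw [preimage_inter, hinv, preimage_iet_Ico hL π]
    have hlam : lam (s ∩ Ico 0 1) = lam s := by simp [lam_apply, inter_assoc]
    rw [eventuallyConst_set', ae_eq_empty, ae_eq_univ, prob_compl_eq_zero_iff hs, ← hlam]
    exact h _ inter_subset_right (hs.inter measurableSet_Ico) hinv'

def breakpoints (L : Fin d → ℝ) : Set ℝ :=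
  range (pieceLeft L) ∪ range fun j => pieceLeft L j + L j

theorem finite_breakpoints (L : Fin d → ℝ) : (breakpoints L).Finite :=
  (finite_range _).union (finite_range _)

theorem isPiecewiseTranslation_iet (hL : L ∈ simplexSet d) (π : Equiv.Perm (Fin d)) :
    IsPiecewiseTranslation (iet L π) (breakpoints L) := by
  intro z w hzw hfree
  have hpiece : ∀ j, inPiece L j w ↔ inPiece L j z := fun j =>
    mem_Ico_iff_of_notMem_Ioc hzw (hfree _ (Or.inl ⟨j, rfl⟩)) (hfree _ (Or.inr ⟨j, rfl⟩))
  by_cases hz : z ∈ Ico 0 1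
  · obtain ⟨j, hj⟩ := exists_inPiece hL hz
    rw [iet_of_inPiece hL π hj, iet_of_inPiece hL π ((hpiece j).2 hj)]
    ring
  · have hw : w ∉ Ico 0 1 := fun hw =>
      let ⟨j, hj⟩ := exists_inPiece hL hw
      hz (mem_Ico_of_inPiece hL ((hpiece j).1 hj))
    rw [iet_of_notMem hL π hz, iet_of_notMem hL π hw, sub_self, sub_self]

theorem exists_abs_sub_pieceLeft_le (hL : L ∈ simplexSet d) {i i' : Fin d} {y y' : ℝ}
    (hy : inPiece L i y) (hy' : inPiece L i' y') (hne : i ≠ i') :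
    ∃ j, |y - pieceLeft L j| ≤ |y - y'| := by
  rcases lt_or_gt_of_ne hne with hlt | hlt
  · have := partialSum_mono hL (Nat.succ_le_of_lt hlt)
    rw [partialSum_val_succ, partialSum_val] at this
    refine ⟨i', ?_⟩
    rw [abs_of_nonpos (by linarith [hy.2]), abs_of_nonpos (by linarith [hy.2, hy'.1])]
    linarith [hy'.1]
  · have := partialSum_mono hL (Nat.succ_le_of_lt hlt)
    rw [partialSum_val_succ, partialSum_val] at this
    refine ⟨i, ?_⟩
    rw [abs_of_nonneg (by linarith [hy.1]), abs_of_nonneg (by linarith [hy.1, hy'.2])]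
    linarith [hy'.2]

theorem iet_sub_eq_or_exists_abs_sub_pieceLeft_le (hL : L ∈ simplexSet d) (π : Equiv.Perm (Fin d))
    {z w : ℝ} (hz : z ∈ Ico 0 1) (hw : w ∈ Ico 0 1) :
    iet L π z - z = iet L π w - w ∨
      ∃ j, |iet L π z - pieceLeft (L ∘ π.symm) j| ≤ |iet L π z - iet L π w| := by
  obtain ⟨i, hi⟩ := exists_inPiece hL hz
  obtain ⟨i', hi'⟩ := exists_inPiece hL hw
  by_cases h : i = i'
  · subst h
    left
    rw [iet_of_inPiece hL π hi, iet_of_inPiece hL π hi']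
    ring
  · exact Or.inr <| exists_abs_sub_pieceLeft_le (comp_symm_mem_simplexSet hL π)
      (inPiece_iet hL π hi) (inPiece_iet hL π hi') (π.injective.ne h)

theorem measure_orbitApprox_eq_zero_or_one (hL : L ∈ simplexSet d) (π : Equiv.Perm (Fin d))
    (herg : Ergodic (iet L π) lam) (ha : Antitone a) (hsmall : ∀ θ > 0, ∃ i, a i < θ) {x : ℝ}
    (hx : x ∈ Ico 0 1) :
    lam (orbitApprox (iet L π) a x) = 0 ∨ lam (orbitApprox (iet L π) a x) = 1 := by
  set T := iet L π
  have hE : MeasurableSet (orbitApprox T a x) :=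
    measurableSet_limsupSet fun _ => measurableSet_ball
  -- off the null set `T⁻¹' (image endpoints)`, `T z` near `T^[i+1] x` forces `z` near `T^[i] x`
  have hTE : T ⁻¹' orbitApprox T a x ≤ᵐ[lam] orbitApprox T a x := by
    have hΓ : ∀ᵐ z ∂lam, T z ∉ range (pieceLeft (L ∘ π.symm)) :=
      herg.quasiMeasurePreserving.ae ((finite_range _).countable.ae_notMem lam)
    filter_upwards [ae_restrict_mem measurableSet_Ico, hΓ] with z hz hzΓ hzE
    have hsep : ∀ᶠ i in atTop, ∀ j, a (i + 1) < |T z - pieceLeft (L ∘ π.symm) j| := by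
      refine eventually_all.2 fun j => ?_
      obtain ⟨i₀, hi₀⟩ := hsmall _ (abs_pos.2 (sub_ne_zero.2 fun h => hzΓ ⟨j, h.symm⟩))
      exact eventually_atTop.2 ⟨i₀, fun i hi => (ha (hi.trans i.le_succ)).trans_lt hi₀⟩
    refine mem_orbitApprox.2 (((frequently_atTop_succ (mem_orbitApprox.1 hzE)).and_eventually
      hsep).mono fun i ⟨hi, hsep⟩ => ?_)
    rw [iterate_succ_apply', Real.dist_eq] at hi
    rw [Real.dist_eq]
    rcases iet_sub_eq_or_exists_abs_sub_pieceLeft_le hL π hz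
      (mapsTo_iet hL π |>.iterate i hx) with h | ⟨j, hj⟩
    · calc |z - T^[i] x| = |T z - T (T^[i] x)| := by congr 1; linarith
        _ < a (i + 1) := hi
        _ ≤ a i := ha i.le_succ
    · exact absurd (hj.trans_lt hi) (hsep j).not_gt
  rcases herg.ae_empty_or_univ_of_preimage_ae_le hE.nullMeasurableSet hTE with h | h
  · exact Or.inl (ae_eq_empty.1 h)
  · exact Or.inr ((prob_compl_eq_zero_iff hE).1 (ae_eq_univ.1 h))

theorem Ico_subset_orbitApprox (hL : L ∈ simplexSet d) (π : Equiv.Perm (Fin d))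
    (herg : Ergodic (iet L π) lam) {θ : ℝ} (hθ : 0 < θ) (haθ : ∀ i, θ ≤ a i) {x : ℝ}
    (hx : x ∈ Ico 0 1) : Ico 0 1 ⊆ orbitApprox (iet L π) a x := by
  intro y hy
  have hJ : 0 < lam (Ico y (min (y + θ) 1)) := by
    rw [lam_Ico hy.1 (min_le_right _ _), ENNReal.ofReal_pos, sub_pos]
    exact lt_min (by linarith) hy.2
  refine mem_orbitApprox.2 <| ((isPiecewiseTranslation_iet hL π).frequently_iterate_mem_Ico
    (finite_breakpoints L) (iet_injective hL π) (mapsTo_iet hL π) herg hJ hx).mono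
    fun i hi => ?_
  rw [Real.dist_eq, abs_sub_lt_iff]
  constructor <;> linarith [hi.1, hi.2.trans_le (min_le_left _ _), haθ i]

end IntervalExchange

open IntervalExchange

theorem ergodic_zero_one_law_general {d : ℕ} (L : Fin d → ℝ) (hL : L ∈ simplexSet d)
    (π : Equiv.Perm (Fin d)) (hErg : ergodicOn01 (iet L π))
    (a : ℕ → ℝ) (hmono : ∀ m n, m ≤ n → a n ≤ a m) :
    (∀ x ∈ Set.Ico (0 : ℝ) 1,
      0 < lam (limsupSet fun i => Metric.ball ((iet L π)^[i] x) (a i)) →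
      lam (limsupSet fun i => Metric.ball ((iet L π)^[i] x) (a i)) = 1) ∧
    (0 < lam {x | lam (limsupSet fun i => Metric.ball ((iet L π)^[i] x) (a i)) = 1} →
      ∀ᵐ x ∂lam,
        lam (limsupSet fun i => Metric.ball ((iet L π)^[i] x) (a i)) = 1) := by
  have herg := ergodic_iet hL π hErg
  have ha : Antitone a := fun m n h => hmono m n h
  refine ⟨fun x hx hpos => ?_, ae_measure_orbitApprox_eq_one herg ha⟩
  by_cases hθ : ∃ θ > 0, ∀ i, θ ≤ a i
  · obtain ⟨θ, hθ, haθ⟩ := hθ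
    refine le_antisymm prob_le_one ?_
    calc (1 : ENNReal) = lam (Ico 0 1) := by simp [lam_Ico]
      _ ≤ _ := measure_mono (Ico_subset_orbitApprox hL π herg hθ haθ hx)
  · push Not at hθ
    exact (measure_orbitApprox_eq_zero_or_one hL π herg ha hθ hx).resolve_left hpos.ne'

/-- zero-one law for the limsup sets of an ergodic IET (balls about orbits). -/
theorem ergodic_zero_one_law {d : ℕ} (L : Fin d → ℝ) (hL : L ∈ simplexSet d)
    (π : Equiv.Perm (Fin d)) (hErg : ergodicOn01 (iet L π))
    (a : ℕ → ℝ) (hpos : ∀ i, 0 < a i) (hmono : ∀ m n, m ≤ n → a n ≤ a m) :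
    (∀ x ∈ Set.Ico (0 : ℝ) 1,
      0 < lam (limsupSet fun i => Metric.ball ((iet L π)^[i] x) (a i)) →
      lam (limsupSet fun i => Metric.ball ((iet L π)^[i] x) (a i)) = 1) ∧
    (0 < lam {x | lam (limsupSet fun i => Metric.ball ((iet L π)^[i] x) (a i)) = 1} →
      ∀ᵐ x ∂lam,
        lam (limsupSet fun i => Metric.ball ((iet L π)^[i] x) (a i)) = 1) :=
  ergodic_zero_one_law_general L hL π hErg a hmono
end
end

section
/- Let ε > 0, e > 0, and n, t ∈ ℕ with n ≥ 1. If z_1,…,z_n ∈ ℝ are pairwise (e/n)-separated (i.e., |z_i − z_j| ≥ e/n for all i ≠ j), and S ⊆ ℝ is a union of t intervals with Lebesgue measure λ(S) ≤ ε, then for every δ with 0 < δ < e/(2n), λ(⋃_{i=1}^n B(z_i, δ) \ S) ≥ (n − 2t − nε/e)·δ. -/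
/-!
Let `r = e / n` and attach to each `zᵢ` the cell `Jᵢ = (zᵢ - δ, zᵢ - δ + r)`; the cells are
pairwise disjoint by separation and each contains the ball `B(zᵢ, δ)` because `2δ < r`.
If a ball meets `S` while its cell is not contained in `S`, then one of the intervals of `S`
meets the cell without covering it, and an interval can do that to at most two cells (one on
each side). At most `λ(S) / r ≤ nε/e` cells lie inside `S`. The remaining at least
`n - 2t - nε/e` balls miss `S`, and each of them has measure `2δ`.
-/

open MeasureTheory Filter

noncomputable section

open Set Function

section CellsMetWithoutCovering

variable {α ι : Type*} [LinearOrder α] {s : Set α} {J : ι → Set α}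

theorem subsingleton_setOf_exists_mem_lt_notMem (hs : s.OrdConnected)
    (hJ : ∀ i, (J i).OrdConnected) (hdisj : Pairwise (Disjoint on J)) :
    {i | ∃ x ∈ s ∩ J i, ∃ y ∈ J i \ s, x < y}.Subsingleton := by
  rintro i ⟨x, ⟨hxs, hxJ⟩, y, ⟨hyJ, hys⟩, hxy⟩ i' ⟨x', ⟨hxs', hxJ'⟩, y', ⟨hyJ', hys'⟩, hxy'⟩
  by_contra hne
  -- An ord-connected `s` containing `x < y` but not `y` has no point beyond `y`.
  have hx'y : x' < y := not_le.1 fun h => hys (hs.out hxs hxs' ⟨hxy.le, h⟩)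
  have hxy' : x < y' := not_le.1 fun h => hys' (hs.out hxs' hxs ⟨hxy'.le, h⟩)
  rcases le_total x x' with h | h
  · exact disjoint_left.1 (hdisj hne) ((hJ i).out hxJ hyJ ⟨h, hx'y.le⟩) hxJ'
  · exact disjoint_left.1 (hdisj hne) hxJ ((hJ i').out hxJ' hyJ' ⟨h, hxy'.le⟩)

theorem subsingleton_setOf_exists_mem_gt_notMem (hs : s.OrdConnected)
    (hJ : ∀ i, (J i).OrdConnected) (hdisj : Pairwise (Disjoint on J)) :
    {i | ∃ x ∈ s ∩ J i, ∃ y ∈ J i \ s, y < x}.Subsingleton :=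
  subsingleton_setOf_exists_mem_lt_notMem (α := αᵒᵈ) hs.dual (fun i => (hJ i).dual) hdisj

open Classical in
theorem card_filter_inter_nonempty_not_subset_le_two [Fintype ι] (hs : s.OrdConnected)
    (hJ : ∀ i, (J i).OrdConnected) (hdisj : Pairwise (Disjoint on J)) :
    (Finset.univ.filter fun i => (s ∩ J i).Nonempty ∧ ¬J i ⊆ s).card ≤ 2 := by
  have hsplit : (Finset.univ.filter fun i => (s ∩ J i).Nonempty ∧ ¬J i ⊆ s) ⊆
      (Finset.univ.filter fun i => ∃ x ∈ s ∩ J i, ∃ y ∈ J i \ s, x < y) ∪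
        Finset.univ.filter fun i => ∃ x ∈ s ∩ J i, ∃ y ∈ J i \ s, y < x := by
    intro i hi
    obtain ⟨⟨x, hx⟩, hJs⟩ := (Finset.mem_filter.1 hi).2
    obtain ⟨y, hyJ, hys⟩ := not_subset.1 hJs
    rcases lt_or_gt_of_ne (ne_of_mem_of_not_mem hx.1 hys) with h | h
    · exact Finset.mem_union_left _ (by simpa using ⟨x, hx, y, ⟨hyJ, hys⟩, h⟩)
    · exact Finset.mem_union_right _ (by simpa using ⟨x, hx, y, ⟨hyJ, hys⟩, h⟩)
  have hcard_le_one {p : ι → Prop} (hp : {i | p i}.Subsingleton) :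
      (Finset.univ.filter p).card ≤ 1 :=
    Finset.card_le_one.2 fun a ha b hb => hp (by simpa using ha) (by simpa using hb)
  calc _ ≤ _ := Finset.card_le_card hsplit
    _ ≤ 1 + 1 := (Finset.card_union_le _ _).trans (add_le_add
        (hcard_le_one (subsingleton_setOf_exists_mem_lt_notMem hs hJ hdisj))
        (hcard_le_one (subsingleton_setOf_exists_mem_gt_notMem hs hJ hdisj)))

open Classical in
theorem card_le_card_filter_subset_add_card_filter_disjoint [Fintype ι] {κ : Type*} [Fintype κ]
    {I : κ → Set α} {B : ι → Set α} (hI : ∀ j, (I j).OrdConnected)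
    (hJ : ∀ i, (J i).OrdConnected) (hdisj : Pairwise (Disjoint on J)) (hBJ : ∀ i, B i ⊆ J i) :
    Fintype.card ι ≤ 2 * Fintype.card κ + (Finset.univ.filter fun i => J i ⊆ ⋃ j, I j).card +
      (Finset.univ.filter fun i => Disjoint (B i) (⋃ j, I j)).card := by
  set bad : κ → Finset ι := fun j =>
    Finset.univ.filter fun i => (I j ∩ J i).Nonempty ∧ ¬J i ⊆ I j
  set X := Finset.univ.filter fun i => J i ⊆ ⋃ j, I j
  set C := Finset.univ.filter fun i => Disjoint (B i) (⋃ j, I j)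
  have hcover : (Finset.univ : Finset ι) ⊆ Finset.univ.biUnion bad ∪ X ∪ C := by
    intro i _
    by_cases hB : Disjoint (B i) (⋃ j, I j)
    · exact Finset.mem_union_right _ (Finset.mem_filter.2 ⟨Finset.mem_univ _, hB⟩)
    by_cases hJS : J i ⊆ ⋃ j, I j
    · exact Finset.mem_union_left _
        (Finset.mem_union_right _ (Finset.mem_filter.2 ⟨Finset.mem_univ _, hJS⟩))
    obtain ⟨x, hxB, hxS⟩ := not_disjoint_iff.1 hB
    obtain ⟨j, hxI⟩ := mem_iUnion.1 hxS
    have : i ∈ bad j := Finset.mem_filter.2 ⟨Finset.mem_univ _,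
      ⟨x, hxI, hBJ i hxB⟩, fun h => hJS (h.trans (subset_iUnion I j))⟩
    exact Finset.mem_union_left _
      (Finset.mem_union_left _ (Finset.mem_biUnion.2 ⟨j, Finset.mem_univ _, this⟩))
  have hbad : ∑ j, (bad j).card ≤ 2 * Fintype.card κ :=
    calc ∑ j, (bad j).card ≤ ∑ _j : κ, 2 := Finset.sum_le_sum fun j _ =>
          card_filter_inter_nonempty_not_subset_le_two (hI j) hJ hdisj
      _ = 2 * Fintype.card κ := by rw [Finset.sum_const, smul_eq_mul, mul_comm, Finset.card_univ]
  calc Fintype.card ι ≤ (Finset.univ.biUnion bad ∪ X ∪ C).card := Finset.card_le_card hcover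
    _ ≤ (Finset.univ.biUnion bad).card + X.card + C.card :=
      (Finset.card_union_le _ _).trans (by gcongr; exact Finset.card_union_le _ _)
    _ ≤ 2 * Fintype.card κ + X.card + C.card := by
      gcongr; exact Finset.card_biUnion_le.trans hbad

end CellsMetWithoutCovering

theorem Finset.card_mul_le_measure {α ι : Type*} [MeasurableSpace α] {μ : Measure α}
    {J : ι → Set α} {S : Set α} {c : ENNReal} (s : Finset ι) (hdisj : Pairwise (Disjoint on J))
    (hm : ∀ i, MeasurableSet (J i)) (hc : ∀ i ∈ s, c ≤ μ (J i)) (hS : ∀ i ∈ s, J i ⊆ S) :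
    s.card * c ≤ μ S :=
  calc s.card * c = ∑ _i ∈ s, c := by rw [Finset.sum_const, nsmul_eq_mul]
    _ ≤ ∑ i ∈ s, μ (J i) := Finset.sum_le_sum hc
    _ = μ (⋃ i ∈ s, J i) := (measure_biUnion_finset (hdisj.set_pairwise _) fun i _ => hm i).symm
    _ ≤ μ S := measure_mono (iUnion₂_subset hS)

theorem pairwise_disjoint_Ioo_of_le_abs_sub {ι : Type*} {z : ι → ℝ} {r : ℝ} (a : ℝ)
    (hz : Pairwise fun i j => r ≤ |z i - z j|) :
    Pairwise (Disjoint on fun i => Ioo (z i - a) (z i - a + r)) :=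
  fun i j hij => disjoint_left.2 fun p hpi hpj => (hz hij).not_gt <|
    abs_sub_lt_iff.2 ⟨by linarith [hpi.1, hpj.2], by linarith [hpi.2, hpj.1]⟩

theorem separated_lemma_general (ε e : ℝ) (hε : 0 < ε) (n t : ℕ)
    (z : Fin n → ℝ) (hsep : ∀ i j, i ≠ j → e / n ≤ |z i - z j|)
    (I : Fin t → Set ℝ) (hI : ∀ i, (I i).OrdConnected)
    (hS : volume (⋃ i, I i) ≤ ENNReal.ofReal ε)
    (δ : ℝ) (hδ : 0 < δ) (hδ' : δ < e / (2 * n)) :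
    ENNReal.ofReal (((n : ℝ) - 2 * t - n * ε / e) * δ) ≤
      volume ((⋃ i, Metric.ball (z i) δ) \ ⋃ i, I i) := by
  classical
  obtain ⟨he, hn⟩ : 0 < e ∧ (0 : ℝ) < n := by
    rcases div_pos_iff.1 (hδ.trans hδ') with h | h
    · exact ⟨h.1, by linarith [h.2]⟩
    · exact absurd h.2 (by positivity : (0 : ℝ) ≤ 2 * n).not_gt
  set r := e / n with hr
  have h2δ : 2 * δ < r := by
    rw [hr, lt_div_iff₀ hn]; rw [lt_div_iff₀ (by positivity)] at hδ'; linarith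
  set J : Fin n → Set ℝ := fun i => Ioo (z i - δ) (z i - δ + r)
  have hJdisj : Pairwise (Disjoint on J) := pairwise_disjoint_Ioo_of_le_abs_sub δ (hsep · ·)
  have hBJ : ∀ i, Metric.ball (z i) δ ⊆ J i := fun i => by
    rw [Real.ball_eq_Ioo]; exact Ioo_subset_Ioo le_rfl (by linarith)
  have hcount := card_le_card_filter_subset_add_card_filter_disjoint hI
    (fun i => ordConnected_Ioo) hJdisj hBJ
  set X := Finset.univ.filter fun i => J i ⊆ ⋃ j, I j
  set C := Finset.univ.filter fun i => Disjoint (Metric.ball (z i) δ) (⋃ j, I j)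
  have hX := (X.card_mul_le_measure (c := ENNReal.ofReal r) hJdisj (fun _ => measurableSet_Ioo)
    (fun i _ => by simp [J, Real.volume_Ioo]) fun i hi => (Finset.mem_filter.1 hi).2).trans hS
  rw [← ENNReal.ofReal_natCast, ← ENNReal.ofReal_mul (by positivity),
    ENNReal.ofReal_le_ofReal_iff hε.le, ← le_div_iff₀ (by positivity), hr,
    div_div_eq_mul_div, mul_comm ε] at hX
  have hC := C.card_mul_le_measure (c := ENNReal.ofReal (2 * δ))
    (fun i i' hne => (hJdisj hne).mono (hBJ i) (hBJ i')) (fun _ => Metric.isOpen_ball.measurableSet)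
    (fun i _ => by rw [Real.volume_ball]) fun i hi => subset_sdiff.2
      ⟨subset_iUnion (fun i => Metric.ball (z i) δ) i, (Finset.mem_filter.1 hi).2⟩
  rw [← ENNReal.ofReal_natCast, ← ENNReal.ofReal_mul (by positivity)] at hC
  refine (ENNReal.ofReal_le_ofReal ?_).trans hC
  have : (n : ℝ) ≤ 2 * t + X.card + C.card := by exact_mod_cast (by simpa using hcount)
  nlinarith

/-- separated points escape a small union of intervals. -/
theorem separated_lemma (ε e : ℝ) (hε : 0 < ε) (he : 0 < e) (n t : ℕ) (hn : 1 ≤ n)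
    (z : Fin n → ℝ) (hsep : ∀ i j, i ≠ j → e / n ≤ |z i - z j|)
    (I : Fin t → Set ℝ) (hI : ∀ i, (I i).OrdConnected)
    (hS : volume (⋃ i, I i) ≤ ENNReal.ofReal ε)
    (δ : ℝ) (hδ : 0 < δ) (hδ' : δ < e / (2 * n)) :
    ENNReal.ofReal (((n : ℝ) - 2 * t - n * ε / e) * δ) ≤
      volume ((⋃ i, Metric.ball (z i) δ) \ ⋃ i, I i) :=
  separated_lemma_general ε e hε n t z hsep I hI hS δ hδ hδ'

end
end

section
/- (Boshernitzan–Chaika) If {a_i}_{i≥1} is a non-increasing sequence of positive reals with lim_{i→∞} i·a_i = 0, then there exists an irrational α such that for every x ∈ ℝ/ℤ, λ(⋂_{n≥1} ⋃_{i≥n} B(R_α^i x, a_i)) = 0. -/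
open MeasureTheory Filter

noncomputable section

/-!
Take `α = ∑ 1 / q k` with `q k ∣ q (k + 1)` growing so fast that `α` is a Liouville number and
`|α - p k / q k| ≤ 2 / q (k + 1)`. Split time into blocks `[m k, m (k + 1))`, where
`q (k + 1) = m (k + 1) * (4 q k) ^ (k + 1)`. Throughout block `k` the orbit of `x` under `α` stays
within `2 / (4 q k) ^ (k + 1)` of its orbit under `p k / q k`, which has only `q k` points, so the
balls of block `k` fit into `q k` balls of radius `a (m k) + 2 / (4 q k) ^ (k + 1)`. Since
`i * a i → 0`, `m (k + 1)` can be taken so large that `q (k + 1) * a (m (k + 1)) ≤ 2⁻ᵏ`; the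
measures of the blocks are then summable and Borel–Cantelli applies.
-/

open Metric

section Lacunary

variable {u : ℕ → ℝ}

lemma le_mul_half_pow_of_two_mul_succ_le (h : ∀ j, 2 * u (j + 1) ≤ u j) (k j : ℕ) :
    u (j + k) ≤ u k * (1 / 2) ^ j := by
  induction j with
  | zero => simp
  | succ j ih =>
    have := h (j + k)
    rw [pow_succ, ← mul_assoc, Nat.add_right_comm]
    linarith

lemma summable_of_two_mul_succ_le (hu : ∀ j, 0 ≤ u j) (h : ∀ j, 2 * u (j + 1) ≤ u j) :
    Summable u :=
  .of_nonneg_of_le hu (by simpa using le_mul_half_pow_of_two_mul_succ_le h 0)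
    (summable_geometric_two.mul_left _)

lemma tsum_nat_add_le_two_mul (hu : ∀ j, 0 ≤ u j) (h : ∀ j, 2 * u (j + 1) ≤ u j) (k : ℕ) :
    ∑' j, u (j + k) ≤ 2 * u k :=
  calc ∑' j, u (j + k) ≤ ∑' j, u k * (1 / 2) ^ j :=
        ((summable_nat_add_iff k).2 (summable_of_two_mul_succ_le hu h)).tsum_le_tsum
          (le_mul_half_pow_of_two_mul_succ_le h k) (summable_geometric_two.mul_left _)
    _ = 2 * u k := by rw [tsum_mul_left, tsum_geometric_two, mul_comm]

end Lacunary

section UnitFractions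

variable {q : ℕ → ℕ}

lemma pos_of_two_mul_pow_le (hq : 0 < q 0) (hgrowth : ∀ k, 2 * q k ^ (k + 1) ≤ q (k + 1))
    (k : ℕ) : 0 < q k := by
  induction k with
  | zero => exact hq
  | succ k ih => exact lt_of_lt_of_le (by positivity) (hgrowth k)

lemma exists_int_eq_mul_sum_inv (hq : ∀ k, 0 < q k) (hdvd : ∀ k, q k ∣ q (k + 1)) (k : ℕ) :
    ∃ p : ℤ, (p : ℝ) = q k * ∑ j ∈ Finset.range (k + 1), (q j : ℝ)⁻¹ := by
  induction k with
  | zero => exact ⟨1, by simp [(hq 0).ne']⟩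
  | succ k ih =>
    obtain ⟨p, hp⟩ := ih
    obtain ⟨c, hc⟩ := hdvd k
    have hqk : (q k : ℝ) ≠ 0 := by exact_mod_cast (hq k).ne'
    have hc0 : (c : ℝ) ≠ 0 := Nat.cast_ne_zero.2 (right_ne_zero_of_mul (hc ▸ (hq (k + 1)).ne'))
    refine ⟨c * p + 1, ?_⟩
    rw [Finset.sum_range_succ, hc]
    push_cast
    rw [hp]
    field_simp

lemma exists_int_approx_tsum_inv (hq : 0 < q 0) (hgrowth : ∀ k, 2 * q k ^ (k + 1) ≤ q (k + 1))
    (hdvd : ∀ k, q k ∣ q (k + 1)) (k : ℕ) :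
    ∃ p : ℤ, 0 < ∑' j, (q j : ℝ)⁻¹ - p / q k ∧ ∑' j, (q j : ℝ)⁻¹ - p / q k ≤ 2 / q (k + 1) := by
  have hpos := pos_of_two_mul_pow_le hq hgrowth
  have hnn : ∀ j, 0 ≤ (q j : ℝ)⁻¹ := fun j => by positivity
  have hhalf : ∀ j, 2 * (q (j + 1) : ℝ)⁻¹ ≤ (q j : ℝ)⁻¹ := fun j => by
    have h2 : 2 * q j ≤ q (j + 1) :=
      le_trans (Nat.mul_le_mul_left 2 (Nat.le_self_pow (Nat.succ_ne_zero j) _)) (hgrowth j)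
    have := hpos j
    have := hpos (j + 1)
    rw [← div_eq_mul_inv, div_le_iff₀ (by positivity), mul_comm, ← div_eq_mul_inv,
      le_div_iff₀ (by positivity)]
    exact_mod_cast h2
  have hsum := summable_of_two_mul_succ_le hnn hhalf
  obtain ⟨p, hp⟩ := exists_int_eq_mul_sum_inv hpos hdvd k
  have hdiff : ∑' j, (q j : ℝ)⁻¹ - p / q k = ∑' j, (q (j + (k + 1)) : ℝ)⁻¹ := by
    rw [hp, mul_div_cancel_left₀ _ (by exact_mod_cast (hpos k).ne'),
      ← hsum.sum_add_tsum_nat_add (k + 1), add_sub_cancel_left]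
  refine ⟨p, ?_, ?_⟩
  · rw [hdiff]
    exact ((summable_nat_add_iff _).2 hsum).tsum_pos (fun j => hnn _) 0
      (by have := hpos (k + 1); simpa using this)
  · rw [hdiff, div_eq_mul_inv]
    exact tsum_nat_add_le_two_mul hnn hhalf (k + 1)

lemma liouville_tsum_inv (hq : 0 < q 0) (hgrowth : ∀ k, 2 * q k ^ (k + 1) ≤ q (k + 1))
    (hdvd : ∀ k, q k ∣ q (k + 1)) : Liouville (∑' j, (q j : ℝ)⁻¹) := by
  intro n
  obtain ⟨p, hp0, hp⟩ := exists_int_approx_tsum_inv hq hgrowth hdvd (n + 1)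
  have hpos := pos_of_two_mul_pow_le hq hgrowth
  have hq2 : (2 : ℝ) ≤ q (n + 1) := by
    have := le_trans (Nat.mul_le_mul_left 2 (Nat.one_le_pow _ _ (hpos n))) (hgrowth n)
    exact_mod_cast this
  have hgrow' : (2 : ℝ) * q (n + 1) ^ (n + 2) ≤ q (n + 2) := by exact_mod_cast hgrowth (n + 1)
  refine ⟨p, q (n + 1), by exact_mod_cast hq2, fun h => hp0.ne' (by rw [h]; push_cast; ring), ?_⟩
  push_cast
  rw [abs_of_pos hp0]
  calc _ ≤ 2 / (q (n + 2) : ℝ) := hp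
    _ ≤ 2 / (2 * q (n + 1) ^ (n + 2)) := by gcongr
    _ = 1 / (q (n + 1) ^ n * q (n + 1) ^ 2) := by rw [← pow_add]; field_simp
    _ < 1 / q (n + 1) ^ n := by
        gcongr
        exact lt_mul_of_one_lt_right (by positivity) (by nlinarith)

end UnitFractions

namespace AddCircle

lemma dist_nsmul_coe_le {T : ℝ} (α β : ℝ) (i : ℕ) :
    dist (i • (α : AddCircle T)) (i • (β : AddCircle T)) ≤ i * |α - β| := by
  rw [dist_eq_norm, ← smul_sub, ← coe_sub]
  exact norm_nsmul_le.trans (mul_le_mul_of_nonneg_left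
    (QuotientAddGroup.norm_mk_le_norm (S := AddSubgroup.zmultiples T)) (Nat.cast_nonneg i))

lemma volume_ball_le {T : ℝ} [Fact (0 < T)] (x : AddCircle T) (r : ℝ) :
    volume (ball x r) ≤ .ofReal (2 * r) :=
  calc volume (ball x r) ≤ volume (closedBall x r) := measure_mono ball_subset_closedBall
    _ = .ofReal (min T (2 * r)) := volume_closedBall T r
    _ ≤ .ofReal (2 * r) := ENNReal.ofReal_le_ofReal (min_le_right _ _)

lemma nsmul_coe_div_self (p : ℤ) {q : ℕ} (hq : 0 < q) :
    q • ((p / q : ℝ) : UnitAddCircle) = 0 := by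
  rw [← coe_nsmul, nsmul_eq_mul, mul_div_cancel₀ _ (by exact_mod_cast hq.ne'), coe_eq_zero_iff]
  exact ⟨p, by simp⟩

/-- While `i * |α - p / q| ≤ δ`, the orbit of `x` under `α` stays `δ`-close to the orbit under
`p / q`, which visits only `q` points. -/
lemma volume_biUnion_ball_nsmul_le (x : UnitAddCircle) (α : ℝ) (p : ℤ) {q : ℕ} (hq : 0 < q)
    {I : Set ℕ} {r : ℕ → ℝ} {ρ δ : ℝ} (hr : ∀ i ∈ I, r i ≤ ρ)
    (hδ : ∀ i ∈ I, i * |α - p / q| ≤ δ) :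
    volume (⋃ i ∈ I, ball (x + i • (α : UnitAddCircle)) (r i)) ≤ .ofReal (q * (2 * (ρ + δ))) := by
  set β : UnitAddCircle := ((p / q : ℝ) : UnitAddCircle)
  have hcover : (⋃ i ∈ I, ball (x + i • (α : UnitAddCircle)) (r i)) ⊆
      ⋃ j ∈ Finset.range q, ball (x + j • β) (ρ + δ) := by
    refine Set.iUnion₂_subset fun i hi => ?_
    refine (ball_subset_ball' ?_).trans <| Set.subset_biUnion_of_mem
      (u := fun j => ball (x + j • β) (ρ + δ)) (Finset.mem_range.2 (Nat.mod_lt i hq))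
    rw [← nsmul_eq_mod_nsmul i (nsmul_coe_div_self p hq), dist_add_left]
    linarith [hr i hi, hδ i hi, dist_nsmul_coe_le (T := 1) α (p / q) i]
  calc _ ≤ volume (⋃ j ∈ Finset.range q, ball (x + j • β) (ρ + δ)) := measure_mono hcover
    _ ≤ ∑ j ∈ Finset.range q, volume (ball (x + j • β) (ρ + δ)) := measure_biUnion_finset_le _ _
    _ ≤ ∑ _j ∈ Finset.range q, .ofReal (2 * (ρ + δ)) :=
        Finset.sum_le_sum fun j _ => volume_ball_le _ _
    _ = .ofReal (q * (2 * (ρ + δ))) := by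
        rw [Finset.sum_const, Finset.card_range, nsmul_eq_mul,
          ENNReal.ofReal_mul (Nat.cast_nonneg q), ENNReal.ofReal_natCast]

end AddCircle

lemma limsupSet_eq_limsup {X : Type*} (s : ℕ → Set X) : limsupSet s = limsup s atTop := by
  rw [limsup_eq_iInf_iSup_of_nat]
  rfl

lemma limsupSet_subset_limsupSet_biUnion_Ico {X : Type*} (A : ℕ → Set X) {m : ℕ → ℕ}
    (hm : StrictMono m) :
    limsupSet A ⊆ limsupSet fun k => ⋃ i ∈ Set.Ico (m k) (m (k + 1)), A i := by
  intro y hy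
  simp only [limsupSet, Set.mem_iInter, Set.mem_iUnion, exists_prop] at hy ⊢
  intro K
  obtain ⟨i, hKi, hyi⟩ := hy (m K)
  obtain ⟨k, hki, hik⟩ := hm.exists_between_of_tendsto_atTop hm.tendsto_atTop
    (x := i + 1) (Nat.lt_succ_of_le ((hm.monotone K.zero_le).trans hKi))
  refine ⟨k, ?_, i, ⟨Nat.le_of_lt_succ hki, hik⟩, hyi⟩
  by_contra! hk
  have : m (k + 1) ≤ m K := hm.monotone hk
  omega

lemma measure_limsupSet_eq_zero {X : Type*} [MeasurableSpace X] {μ : Measure X} {s : ℕ → Set X}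
    (hs : ∑' k, μ (s k) ≠ ⊤) : μ (limsupSet s) = 0 := by
  rw [limsupSet_eq_limsup]
  exact measure_limsup_atTop_eq_zero hs

theorem volume_limsupSet_ball_nsmul_eq_zero {α : ℝ} {r : ℕ → ℝ} (hr : Antitone r) {m q : ℕ → ℕ}
    {p : ℕ → ℤ} (hm : StrictMono m) (hq : ∀ k, 0 < q k)
    (hsum : Summable fun k => q k * (2 * (r (m k) + m (k + 1) * |α - p k / q k|)))
    (x : UnitAddCircle) :
    volume (limsupSet fun i => ball (x + i • (α : UnitAddCircle)) (r i)) = 0 := by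
  have hblock k := AddCircle.volume_biUnion_ball_nsmul_le x α (p k) (hq k)
    (I := Set.Ico (m k) (m (k + 1))) (δ := m (k + 1) * |α - p k / q k|) (fun i hi => hr hi.1)
    (fun i hi => mul_le_mul_of_nonneg_right (by exact_mod_cast hi.2.le) (abs_nonneg _))
  exact measure_mono_null (limsupSet_subset_limsupSet_biUnion_Ico _ hm)
    (measure_limsupSet_eq_zero (ne_top_of_le_ne_top hsum.tsum_ofReal_ne_top
      (ENNReal.tsum_le_tsum hblock)))

section Construction

/-- `(m k, q k)`: the `k`-th block of times is `[m k, m (k + 1))` and `q k` the `k`-th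
denominator. If `i * a i ≤ ε` for `i ≥ T ε`, pushing `m (k + 1)` past `T ε` makes
`q (k + 1) * a (m (k + 1)) ≤ 2⁻ᵏ`. -/
def blockSeq (T : ℝ → ℕ) : ℕ → ℕ × ℕ
  | 0 => (0, 1)
  | k + 1 =>
    let m := max ((blockSeq T k).1 + 1) (T (1 / (2 ^ k * (4 * (blockSeq T k).2) ^ (k + 1))))
    (m, m * (4 * (blockSeq T k).2) ^ (k + 1))

variable (T : ℝ → ℕ)

def blockStart (k : ℕ) : ℕ := (blockSeq T k).1

def blockDen (k : ℕ) : ℕ := (blockSeq T k).2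

lemma blockStart_succ (k : ℕ) : blockStart T (k + 1) =
    max (blockStart T k + 1) (T (1 / (2 ^ k * (4 * blockDen T k) ^ (k + 1)))) := rfl

lemma blockDen_succ (k : ℕ) :
    blockDen T (k + 1) = blockStart T (k + 1) * (4 * blockDen T k) ^ (k + 1) := rfl

lemma strictMono_blockStart : StrictMono (blockStart T) :=
  strictMono_nat_of_lt_succ fun k => by rw [blockStart_succ]; omega

lemma blockDen_dvd_succ (k : ℕ) : blockDen T k ∣ blockDen T (k + 1) := by
  rw [blockDen_succ]
  exact (Dvd.intro_left _ rfl).trans ((dvd_pow_self _ k.succ_ne_zero).trans (dvd_mul_left _ _))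

lemma two_mul_pow_le_blockDen_succ (k : ℕ) :
    2 * blockDen T k ^ (k + 1) ≤ blockDen T (k + 1) := by
  have hm : 1 ≤ blockStart T (k + 1) := by rw [blockStart_succ]; omega
  have h4 : 2 ≤ 4 ^ (k + 1) := le_trans (by norm_num) (Nat.le_self_pow k.succ_ne_zero 4)
  rw [blockDen_succ, mul_pow]
  exact (Nat.mul_le_mul_right _ h4).trans (Nat.le_mul_of_pos_left _ hm)

lemma blockDen_pos (k : ℕ) : 0 < blockDen T k :=
  pos_of_two_mul_pow_le Nat.one_pos (two_mul_pow_le_blockDen_succ T) k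

lemma blockDen_succ_mul_le {a : ℕ → ℝ} (hT : ∀ ε > 0, ∀ i ≥ T ε, i * a i ≤ ε) (k : ℕ) :
    blockDen T (k + 1) * a (blockStart T (k + 1)) ≤ (1 / 2) ^ k := by
  set Q : ℝ := (4 * blockDen T k : ℝ) ^ (k + 1)
  have hQ : 0 < Q := by have := blockDen_pos T k; positivity
  have hε : 0 < 1 / (2 ^ k * Q) := by positivity
  have ha := hT _ hε (blockStart T (k + 1)) (by rw [blockStart_succ]; exact le_max_right _ _)
  calc (blockDen T (k + 1) : ℝ) * a (blockStart T (k + 1))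
      = Q * (blockStart T (k + 1) * a (blockStart T (k + 1))) := by
        rw [blockDen_succ]; push_cast; ring
    _ ≤ Q * (1 / (2 ^ k * Q)) := by gcongr
    _ = (1 / 2) ^ k := by rw [one_div_pow]; field_simp

lemma blockDen_mul_blockStart_div_le (k : ℕ) :
    (blockDen T k : ℝ) * blockStart T (k + 1) / blockDen T (k + 1) ≤ (1 / 2) ^ k / 4 := by
  have hq : (1 : ℝ) ≤ blockDen T k := by exact_mod_cast blockDen_pos T k
  have hm : (0 : ℝ) < blockStart T (k + 1) := by
    have := (strictMono_blockStart T).monotone k.zero_le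
    rw [blockStart_succ]; positivity
  rw [blockDen_succ]
  push_cast
  calc _ = 1 / (4 * (4 * blockDen T k : ℝ) ^ k) := by field_simp; ring
    _ ≤ 1 / (4 * 4 ^ k) := by gcongr; nlinarith
    _ ≤ (1 / 2) ^ k / 4 := by
        rw [div_pow, one_pow, div_div, mul_comm]
        gcongr; norm_num

lemma summable_blockSeq {a : ℕ → ℝ} (ha : ∀ i, 0 ≤ a i)
    (hT : ∀ ε > 0, ∀ i ≥ T ε, i * a i ≤ ε) {α : ℝ} {p : ℕ → ℤ}
    (hp : ∀ k, |α - p k / blockDen T k| ≤ 2 / blockDen T (k + 1)) :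
    Summable fun k => (blockDen T k : ℝ) *
      (2 * (a (blockStart T k) + blockStart T (k + 1) * |α - p k / blockDen T k|)) := by
  have hqa : Summable fun k => (blockDen T k : ℝ) * a (blockStart T k) :=
    (summable_nat_add_iff 1).1 <| .of_nonneg_of_le (fun k => mul_nonneg (Nat.cast_nonneg _) (ha _))
      (blockDen_succ_mul_le T hT) summable_geometric_two
  refine .of_nonneg_of_le (fun k => by have := ha (blockStart T k); positivity)
    (fun k => ?_) ((hqa.mul_left 2).add summable_geometric_two)
  have hq : (0 : ℝ) < blockDen T (k + 1) := by exact_mod_cast blockDen_pos T (k + 1)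
  have hdiv := blockDen_mul_blockStart_div_le T k
  rw [div_le_iff₀ hq] at hdiv
  have := mul_le_mul_of_nonneg_left (hp k)
    (by positivity : (0 : ℝ) ≤ blockDen T k * blockStart T (k + 1))
  rw [mul_div_assoc', le_div_iff₀ hq] at this
  nlinarith

end Construction

/-- Boshernitzan–Chaika: if `i * a i → 0` there is a rotation all of whose
limsup sets are null. -/
theorem exists_rotation_null_limsup (a : ℕ → ℝ) (hpos : ∀ i, 0 < a i)
    (hmono : ∀ m n, m ≤ n → a n ≤ a m)
    (hlim : Filter.Tendsto (fun i : ℕ => (i : ℝ) * a i) Filter.atTop (nhds 0)) :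
    ∃ α : ℝ, Irrational α ∧ ∀ x : UnitAddCircle,
      volume (limsupSet fun i =>
        Metric.ball ((fun y => y + (α : UnitAddCircle))^[i] x) (a i)) = 0 := by
  obtain ⟨T, hT⟩ : ∃ T : ℝ → ℕ, ∀ ε > 0, ∀ i ≥ T ε, (i : ℝ) * a i ≤ ε := by
    choose T hT using fun ε : ℝ => eventually_atTop.1 <|
      eventually_imp_distrib_left.2 fun hε : 0 < ε => hlim.eventually (eventually_le_nhds hε)
    exact ⟨T, fun ε hε i hi => hT ε i hi hε⟩
  have hq0 : 0 < blockDen T 0 := Nat.one_pos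
  choose p hp0 hp using
    exists_int_approx_tsum_inv hq0 (two_mul_pow_le_blockDen_succ T) (blockDen_dvd_succ T)
  refine ⟨_, (liouville_tsum_inv hq0 (two_mul_pow_le_blockDen_succ T)
    (blockDen_dvd_succ T)).irrational, fun x => ?_⟩
  simp_rw [add_right_iterate_apply]
  exact volume_limsupSet_ball_nsmul_eq_zero (fun _ _ h => hmono _ _ h) (strictMono_blockStart T)
    (blockDen_pos T) (summable_blockSeq T (fun i => (hpos i).le) hT
      (fun k => (abs_of_pos (hp0 k)).trans_le (hp k))) x
end
end
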